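/- arXiv:2203.10509 — 6 statements merged into one kernel-verified Lean document; each statement's English description precedes it below -/
import Mathlib

section
/- The 2×2 matrix polynomial P(λ) = [[1, λ],[λ, λ²+1]] has constant determinant 1 (hence is stable with respect to any set D ⊆ ℂ), but P is not hyperstable with respect to the closed unit disc: for x = (0,1)ᵀ and every nonzero y ∈ ℂ², the scalar polynomial λ ↦ y*P(λ)x has a root in the closed unit disc. -/
/-!
Since `det P(λ) = 1 - λ² + λ² = 1` identically, `P` is stable. For `x = (0, 1)ᵀ` and
`y = (a, b)`, the scalar polynomial `y* P(λ) x = ā λ + b̄ (λ² + 1)` is palindromic: its roots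
come in pairs `r, r⁻¹` (or it vanishes at `0` when `b = 0`), so one of them lies in the closed
unit disc.
-/

open Polynomial

section PalindromicQuadratic

variable {K : Type*}

theorem mul_inv_add_mul_inv_sq_add_one_eq_zero [Field K] {a b r : K} (hr₀ : r ≠ 0)
    (hr : a * r + b * (r ^ 2 + 1) = 0) : a * r⁻¹ + b * (r⁻¹ ^ 2 + 1) = 0 := by
  field_simp
  linear_combination hr

theorem exists_mul_add_mul_sq_add_one_eq_zero [Field K] [IsAlgClosed K] (a : K) {b : K}
    (hb : b ≠ 0) : ∃ r : K, a * r + b * (r ^ 2 + 1) = 0 := by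
  obtain ⟨r, hr⟩ := IsAlgClosed.exists_root (C b * X ^ 2 + C a * X + C b)
    (by rw [degree_quadratic hb]; decide)
  refine ⟨r, ?_⟩
  simp only [IsRoot, eval_add, eval_mul, eval_C, eval_pow, eval_X] at hr
  linear_combination hr

theorem exists_norm_le_one_mul_add_mul_sq_add_one_eq_zero [NormedField K] [IsAlgClosed K]
    (a b : K) : ∃ μ : K, ‖μ‖ ≤ 1 ∧ a * μ + b * (μ ^ 2 + 1) = 0 := by
  rcases eq_or_ne b 0 with rfl | hb
  · exact ⟨0, by simp, by simp⟩
  obtain ⟨r, hr⟩ := exists_mul_add_mul_sq_add_one_eq_zero a hb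
  have hr₀ : r ≠ 0 := by
    rintro rfl
    exact hb (by simpa using hr)
  rcases le_or_gt ‖r‖ 1 with hle | hgt
  · exact ⟨r, hle, hr⟩
  · refine ⟨r⁻¹, ?_, mul_inv_add_mul_inv_sq_add_one_eq_zero hr₀ hr⟩
    rw [norm_inv]
    exact inv_le_one_of_one_le₀ hgt.le

end PalindromicQuadratic

section Pencil

variable {R : Type*} [CommRing R]

theorem det_pencil (μ : R) : (!![1, μ; μ, μ ^ 2 + 1] : Matrix (Fin 2) (Fin 2) R).det = 1 := by
  rw [Matrix.det_fin_two_of]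
  ring

theorem star_dotProduct_pencil_mulVec [StarRing R] (y : Fin 2 → R) (μ : R) :
    dotProduct (star y) ((!![1, μ; μ, μ ^ 2 + 1] : Matrix (Fin 2) (Fin 2) R).mulVec ![0, 1]) =
      star (y 0) * μ + star (y 1) * (μ ^ 2 + 1) := by
  simp [dotProduct, Matrix.mulVec, Fin.sum_univ_two]

end Pencil

theorem stmt1 :
    (∀ μ : ℂ, (!![1, μ; μ, μ ^ 2 + 1] : Matrix (Fin 2) (Fin 2) ℂ).det = 1) ∧
    (∀ y : Fin 2 → ℂ, y ≠ 0 → ∃ μ : ℂ, ‖μ‖ ≤ 1 ∧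
      dotProduct (star y)
        ((!![1, μ; μ, μ ^ 2 + 1] : Matrix (Fin 2) (Fin 2) ℂ).mulVec ![0, 1]) = 0) := by
  refine ⟨det_pencil, fun y _ => ?_⟩
  obtain ⟨μ, hμ, hroot⟩ := 
    exists_norm_le_one_mul_add_mul_sq_add_one_eq_zero (star (y 0)) (star (y 1))
  exact ⟨μ, hμ, by rw [star_dotProduct_pencil_mulVec, hroot]⟩
end

section
/- Let P(λ) ∈ ℂ^{n×n}[λ] be block upper-triangular with diagonal blocks P_{11}(λ), ..., P_{mm}(λ), each hyperstable with respect to D ⊆ ℂ. Then P(λ) is hyperstable with respect to D. -/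
/-- `P` is hyperstable with respect to `D` (general finite index type). -/
def Hyperstable {ι : Type} [Fintype ι] [DecidableEq ι]
    (P : ℂ → Matrix ι ι ℂ) (D : Set ℂ) : Prop :=
  ∀ x : ι → ℂ, x ≠ 0 → ∃ y : ι → ℂ, y ≠ 0 ∧
    ∀ μ ∈ D, dotProduct (star y) ((P μ).mulVec x) ≠ 0

/-!
Given `x ≠ 0`, let `i` be the last block in which `x` is nonzero. Hyperstability of the diagonal
block `P_ii` provides a test vector `yᵢ` for `xᵢ`; extend it by zero to `y`. Then
`y* P(μ) x = yᵢ* (P(μ) x)ᵢ = yᵢ* P_ii(μ) xᵢ`, because in row block `i` the blocks `P_ij` with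
`j < i` vanish and the components `x_j` with `j > i` vanish.
-/

open Matrix

section Blocks

variable {ι : Type*} {α : ι → Type*}

theorem Fintype.sum_sigma_eq_sum_fiber {M : Type*} [Fintype ι] [∀ i, Fintype (α i)]
    [AddCommMonoid M] {f : Sigma α → M} (i : ι) (hf : ∀ j ≠ i, ∀ b, f ⟨j, b⟩ = 0) :
    ∑ p, f p = ∑ b, f ⟨i, b⟩ := by
  rw [Fintype.sum_sigma]
  exact Fintype.sum_eq_single i fun j hj => Finset.sum_eq_zero fun b _ => hf j hj b

theorem exists_last_nonzero_fiber {R : Type*} [Zero R] [Finite ι] [LinearOrder ι]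
    {x : Sigma α → R} (hx : x ≠ 0) :
    ∃ i, (fun a => x ⟨i, a⟩) ≠ 0 ∧ ∀ j, i < j → ∀ b, x ⟨j, b⟩ = 0 := by
  obtain ⟨⟨i₀, a₀⟩, ha₀⟩ := Function.ne_iff.mp hx
  obtain ⟨i, hi, hmax⟩ :=
    (Set.toFinite {i | ∃ a, x ⟨i, a⟩ ≠ 0}).exists_maximal ⟨i₀, a₀, ha₀⟩
  refine ⟨i, fun h => ?_, fun j hij b => ?_⟩
  · obtain ⟨a, ha⟩ := hi
    exact ha (congrFun h a)
  · by_contra hb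
    exact (hmax ⟨b, hb⟩ hij.le).not_gt hij

variable [Fintype ι] [∀ i, Fintype (α i)] [LinearOrder ι]

theorem Matrix.BlockTriangular.mulVec_fiber {R : Type*} [NonUnitalNonAssocSemiring R]
    {M : Matrix (Sigma α) (Sigma α) R} (hM : M.BlockTriangular Sigma.fst) {x : Sigma α → R}
    {i : ι} (hx : ∀ j, i < j → ∀ b, x ⟨j, b⟩ = 0) :
    (fun a => (M *ᵥ x) ⟨i, a⟩) = M.submatrix (Sigma.mk i) (Sigma.mk i) *ᵥ fun b => x ⟨i, b⟩ := by
  funext a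
  refine Fintype.sum_sigma_eq_sum_fiber i fun j hj b => ?_
  rcases hj.lt_or_gt with hji | hij
  · exact mul_eq_zero_of_left (hM (i := ⟨i, a⟩) (j := ⟨j, b⟩) hji) _
  · exact mul_eq_zero_of_right _ (hx j hij b)

end Blocks

section Extension

variable {ι : Type*} [DecidableEq ι] {α : ι → Type*} {R : Type*}

theorem Sigma.uncurry_single_ne_zero [Zero R] {i : ι} {y : α i → R} (hy : y ≠ 0) :
    Sigma.uncurry (Pi.single i y : ∀ j, α j → R) ≠ 0 := by
  obtain ⟨a, ha⟩ := Function.ne_iff.mp hy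
  exact Function.ne_iff.mpr ⟨⟨i, a⟩, by simpa [Sigma.uncurry] using ha⟩

theorem Sigma.star_uncurry_single_dotProduct [Fintype ι] [∀ i, Fintype (α i)]
    [NonUnitalNonAssocSemiring R] [StarAddMonoid R] (i : ι) (y : α i → R) (v : Sigma α → R) :
    star (Sigma.uncurry (Pi.single i y : ∀ j, α j → R)) ⬝ᵥ v = star y ⬝ᵥ fun a => v ⟨i, a⟩ := by
  refine (Fintype.sum_sigma_eq_sum_fiber i fun j hj b => ?_).trans ?_
  · simp [Sigma.uncurry, Pi.single_eq_of_ne hj]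
  · simp [dotProduct, Sigma.uncurry]

end Extension

theorem Hyperstable.of_blockTriangular {ι : Type} [Fintype ι] [LinearOrder ι] {α : ι → Type}
    [∀ i, Fintype (α i)] [∀ i, DecidableEq (α i)] {Q : ℂ → Matrix (Sigma α) (Sigma α) ℂ}
    {D : Set ℂ} (hQ : ∀ μ, (Q μ).BlockTriangular Sigma.fst)
    (hdiag : ∀ i, Hyperstable (fun μ => (Q μ).submatrix (Sigma.mk i) (Sigma.mk i)) D) :
    Hyperstable Q D := by
  intro x hx
  obtain ⟨i, hxi, hx_after⟩ := exists_last_nonzero_fiber hx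
  obtain ⟨y, hy, hyD⟩ := hdiag i _ hxi
  refine ⟨_, Sigma.uncurry_single_ne_zero hy, fun μ hμ => ?_⟩
  rw [Sigma.star_uncurry_single_dotProduct, (hQ μ).mulVec_fiber hx_after]
  exact hyD μ hμ

theorem stmt3 {m : ℕ} (k : Fin m → ℕ)
    (P : Matrix (Σ i : Fin m, Fin (k i)) (Σ i : Fin m, Fin (k i)) (Polynomial ℂ))
    (D : Set ℂ)
    (htri : ∀ (i j : Fin m) (a : Fin (k i)) (b : Fin (k j)), j < i → P ⟨i, a⟩ ⟨j, b⟩ = 0)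
    (hdiag : ∀ i : Fin m,
      Hyperstable (fun μ => Matrix.of fun a b : Fin (k i) =>
        Polynomial.eval μ (P ⟨i, a⟩ ⟨i, b⟩)) D) :
    Hyperstable (fun μ => P.map (Polynomial.eval μ)) D :=
  Hyperstable.of_blockTriangular
    (fun μ p q hqp => by simp [htri p.1 q.1 p.2 q.2 hqp]) hdiag
end

section
/- For scalar polynomials q(λ) with all roots outside D and p(λ) with p' nonconstant having some root in D, the matrix polynomial P(λ) = [[λp(λ)+q(λ), p(λ)],[λ, 1]] satisfies det P(λ) = q(λ) and det P'(λ) = -p'(λ); hence P is stable with respect to D but P' is not stable with respect to D. -/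
open Polynomial

theorem stmt7 (D : Set ℂ) (p q : Polynomial ℂ)
    (hq : ∀ μ ∈ D, q.eval μ ≠ 0)
    (hp' : 0 < (derivative p).natDegree)
    (hroot : ∃ μ ∈ D, (derivative p).eval μ = 0) :
    (∀ μ : ℂ, (!![μ * p.eval μ + q.eval μ, p.eval μ; μ, 1] :
        Matrix (Fin 2) (Fin 2) ℂ).det = q.eval μ) ∧
    (∀ μ : ℂ, (!![(derivative (X * p + q)).eval μ, (derivative p).eval μ; 1, 0] :
        Matrix (Fin 2) (Fin 2) ℂ).det = -(derivative p).eval μ) ∧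
    (∀ μ ∈ D, (!![μ * p.eval μ + q.eval μ, p.eval μ; μ, 1] :
        Matrix (Fin 2) (Fin 2) ℂ).det ≠ 0) ∧
    ¬ (∀ μ ∈ D, (!![(derivative (X * p + q)).eval μ, (derivative p).eval μ; 1, 0] :
        Matrix (Fin 2) (Fin 2) ℂ).det ≠ 0) := by
  refine ⟨fun μ => by simp [Matrix.det_fin_two_of]; ring,
    fun μ => by simp [Matrix.det_fin_two_of],
    fun μ hμ => by simp [Matrix.det_fin_two_of]; have := hq μ hμ; intro h; apply this; linear_combination h,
    ?_⟩
  obtain ⟨μ, hμD, hμ⟩ := hroot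
  intro h
  exact h μ hμD (by simp [Matrix.det_fin_two_of, hμ])
end

section
/- For P(λ) = [[1, λ],[λ, λ²+1]], the polarized polynomial (T₂P)(z₁,z₂) = [[1, (z₁+z₂)/2],[(z₁+z₂)/2, z₁z₂+1]] satisfies det (T₂P)(z₁,z₂) = 1 - ((z₁-z₂)/2)², so every pair (μ₁,μ₂) with μ₁ - μ₂ = ±2 makes the determinant vanish; in particular T₂P is not stable with respect to H² for H the open upper half-plane, although det P(λ) ≡ 1. -/
noncomputable def T₂P (z₁ z₂ : ℂ) : Matrix (Fin 2) (Fin 2) ℂ :=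
  !![1, (z₁ + z₂) / 2; (z₁ + z₂) / 2, z₁ * z₂ + 1]

theorem stmt15 :
    (∀ μ : ℂ, (!![1, μ; μ, μ ^ 2 + 1] : Matrix (Fin 2) (Fin 2) ℂ).det = 1) ∧
    (∀ z₁ z₂ : ℂ, (T₂P z₁ z₂).det = 1 - ((z₁ - z₂) / 2) ^ 2) ∧
    (∀ μ₁ μ₂ : ℂ, (μ₁ - μ₂ = 2 ∨ μ₁ - μ₂ = -2) → (T₂P μ₁ μ₂).det = 0) ∧
    ¬ (∀ μ₁ : ℂ, 0 < μ₁.im → ∀ μ₂ : ℂ, 0 < μ₂.im → (T₂P μ₁ μ₂).det ≠ 0) := by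
  have hdet : ∀ z₁ z₂ : ℂ, (T₂P z₁ z₂).det = 1 - ((z₁ - z₂) / 2) ^ 2 := by
    intro z₁ z₂
    simp [T₂P, Matrix.det_fin_two]
    ring
  refine ⟨fun μ => by simp [Matrix.det_fin_two]; ring, hdet, ?_, ?_⟩
  · rintro μ₁ μ₂ (h | h) <;> rw [hdet, h] <;> norm_num
  · intro H
    have := H (1 + Complex.I) (by simp) (-1 + Complex.I) (by simp)
    apply this
    rw [hdet]
    have : (1 + Complex.I) - (-1 + Complex.I) = 2 := by ring
    rw [this]
    norm_num
end

section
/- Let R₁, R₂, R₃ ∈ ℂ^{n×n} be Hermitian positive semi-definite, A₀ Hermitian, G skew-Hermitian with -iG positive semi-definite, and ker G ∩ ker A₀ ∩ ker R₁ ∩ ker R₂ ∩ ker R₃ = {0}. Then the bivariate matrix polynomial P₂(z₁,z₂) = z₂³R₃ + z₁z₂R₂ + z₂R₁ + A₀ + G is stable with respect to D₂², where D₂ = {z ∈ ℂ : 0 < Arg z < π/3}: for all (μ₁,μ₂) ∈ D₂² and x ≠ 0, P₂(μ₁,μ₂)x ≠ 0. In particular P(λ) = λ³R₃ + λ²R₂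 + λR₁ + A₀ + G has no eigenvalues in D₂. -/
/-! If `P(μ₁, μ₂) x = 0`, the imaginary part of `x* P(μ₁, μ₂) x = 0` is
`Im(μ₂³) x*R₃x + Im(μ₁μ₂) x*R₂x + Im(μ₂) x*R₁x + x*(-iG)x`, since `x*A₀x` is real. In the sector
`0 < Arg < π/3` all three coefficients are positive, so every term vanishes; a positive
semidefinite `R` with `x*Rx = 0` has `Rx = 0`, hence `x` lies in the common kernel. -/

open scoped ComplexOrder
open Complex Matrix

namespace Complex

lemma im_mul_eq_norm_mul_norm_mul_sin (z w : ℂ) :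
    (z * w).im = ‖z‖ * ‖w‖ * Real.sin (arg z + arg w) := by
  rw [mul_im, Real.sin_add, ← norm_mul_cos_arg z, ← norm_mul_sin_arg z,
    ← norm_mul_cos_arg w, ← norm_mul_sin_arg w]
  ring

lemma im_pow_eq_norm_pow_mul_sin (z : ℂ) (n : ℕ) :
    (z ^ n).im = ‖z‖ ^ n * Real.sin (n * arg z) := by
  conv_lhs => rw [← norm_mul_exp_arg_mul_I z]
  rw [mul_pow, ← exp_nat_mul, ← mul_assoc, ← ofReal_pow, ← ofReal_natCast, ← ofReal_mul,
    im_ofReal_mul, exp_ofReal_mul_I_im]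

lemma ne_zero_of_arg_pos {z : ℂ} (h : 0 < arg z) : z ≠ 0 := by
  rintro rfl
  simp at h

lemma im_mul_pos {z w : ℂ} (hz : 0 < arg z) (hw : 0 < arg w) (h : arg z + arg w < Real.pi) :
    0 < (z * w).im := by
  rw [im_mul_eq_norm_mul_norm_mul_sin]
  have := Real.sin_pos_of_pos_of_lt_pi (add_pos hz hw) h
  have := norm_pos_iff.mpr (ne_zero_of_arg_pos hz)
  have := norm_pos_iff.mpr (ne_zero_of_arg_pos hw)
  positivity

lemma im_pow_pos {z : ℂ} {n : ℕ} (hn : n ≠ 0) (hz : 0 < arg z) (h : n * arg z < Real.pi) :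
    0 < (z ^ n).im := by
  rw [im_pow_eq_norm_pow_mul_sin]
  have := Real.sin_pos_of_pos_of_lt_pi (mul_pos (by positivity) hz) h
  have := norm_pos_iff.mpr (ne_zero_of_arg_pos hz)
  positivity

end Complex

namespace Matrix

variable {ι n : Type*} [Fintype n]

lemma PosSemidef.im_dotProduct_smul_mulVec {M : Matrix n n ℂ} (hM : M.PosSemidef) (c : ℂ)
    (x : n → ℂ) : (star x ⬝ᵥ (c • M) *ᵥ x).im = c.im * (star x ⬝ᵥ M *ᵥ x).re := by
  have hq := Complex.nonneg_iff.mp (hM.dotProduct_mulVec_nonneg x)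
  rw [smul_mulVec, dotProduct_smul, smul_eq_mul, mul_im, ← hq.2, mul_zero, zero_add]

lemma mulVec_eq_zero_of_sum_smul_add_isHermitian {s : Finset ι} {c : ι → ℂ}
    {M : ι → Matrix n n ℂ} {A : Matrix n n ℂ} (hM : ∀ i ∈ s, (M i).PosSemidef)
    (hc : ∀ i ∈ s, 0 < (c i).im) (hA : A.IsHermitian) {x : n → ℂ}
    (hx : (∑ i ∈ s, c i • M i + A) *ᵥ x = 0) :
    (∀ i ∈ s, M i *ᵥ x = 0) ∧ A *ᵥ x = 0 := by
  have him : ∑ i ∈ s, (c i).im * (star x ⬝ᵥ M i *ᵥ x).re = 0 := by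
    have := congrArg (fun v ↦ (star x ⬝ᵥ v).im) hx
    simp only [add_mulVec, sum_mulVec, dotProduct_add, dotProduct_sum, Complex.add_im,
      Complex.im_sum, dotProduct_zero, Complex.zero_im] at this
    rwa [← RCLike.im_to_complex, hA.im_star_dotProduct_mulVec_self, add_zero,
      Finset.sum_congr rfl fun i hi ↦ (hM i hi).im_dotProduct_smul_mulVec (c i) x] at this
  have hterm : ∀ i ∈ s, (c i).im * (star x ⬝ᵥ M i *ᵥ x).re = 0 :=
    (Finset.sum_eq_zero_iff_of_nonneg fun i hi ↦ mul_nonneg (hc i hi).le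
      (Complex.nonneg_iff.mp ((hM i hi).dotProduct_mulVec_nonneg x)).1).mp him
  have hMx : ∀ i ∈ s, M i *ᵥ x = 0 := by
    intro i hi
    have hq := Complex.nonneg_iff.mp ((hM i hi).dotProduct_mulVec_nonneg x)
    have hre := (mul_eq_zero.mp (hterm i hi)).resolve_left (hc i hi).ne'
    exact ((hM i hi).dotProduct_mulVec_zero_iff x).mp (Complex.ext hre hq.2.symm)
  refine ⟨hMx, ?_⟩
  have hsum : ∑ i ∈ s, c i • M i *ᵥ x = 0 :=
    Finset.sum_eq_zero fun i hi ↦ by rw [hMx i hi, smul_zero]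
  simpa only [add_mulVec, sum_mulVec, smul_mulVec, hsum, zero_add] using hx

end Matrix

open scoped ComplexOrder in
theorem stmt18_general {n : ℕ} (R₁ R₂ R₃ A₀ G : Matrix (Fin n) (Fin n) ℂ)
    (hR₁ : R₁.PosSemidef) (hR₂ : R₂.PosSemidef) (hR₃ : R₃.PosSemidef)
    (hA₀ : A₀.IsHermitian)
    (hiG : ((-Complex.I) • G).PosSemidef)
    (hker : ∀ x : Fin n → ℂ, G.mulVec x = 0 → A₀.mulVec x = 0 → R₁.mulVec x = 0 →
      R₂.mulVec x = 0 → R₃.mulVec x = 0 → x = 0) :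
    (∀ μ₁ μ₂ : ℂ,
      0 < Complex.arg μ₁ → Complex.arg μ₁ < Real.pi / 3 →
      0 < Complex.arg μ₂ → Complex.arg μ₂ < Real.pi / 3 →
      ∀ x : Fin n → ℂ, x ≠ 0 →
        (μ₂ ^ 3 • R₃ + (μ₁ * μ₂) • R₂ + μ₂ • R₁ + A₀ + G).mulVec x ≠ 0) ∧
    (∀ μ : ℂ, 0 < Complex.arg μ → Complex.arg μ < Real.pi / 3 →
      (μ ^ 3 • R₃ + μ ^ 2 • R₂ + μ • R₁ + A₀ + G).det ≠ 0) := by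
  have stable : ∀ μ₁ μ₂ : ℂ, 0 < arg μ₁ → arg μ₁ < Real.pi / 3 → 0 < arg μ₂ →
      arg μ₂ < Real.pi / 3 → ∀ x, x ≠ 0 →
        (μ₂ ^ 3 • R₃ + (μ₁ * μ₂) • R₂ + μ₂ • R₁ + A₀ + G) *ᵥ x ≠ 0 := by
    intro μ₁ μ₂ h₁ h₁' h₂ h₂' x hx hPx
    -- `G = I • (-I • G)` makes the skew-Hermitian term one more upper half-plane summand.
    have hP : μ₂ ^ 3 • R₃ + (μ₁ * μ₂) • R₂ + μ₂ • R₁ + A₀ + G =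
        ∑ i, ![μ₂ ^ 3, μ₁ * μ₂, μ₂, I] i • ![R₃, R₂, R₁, (-I) • G] i + A₀ := by
      simp only [Fin.sum_univ_four, Fin.isValue, cons_val_zero, cons_val_one, cons_val,
        neg_smul, smul_neg, smul_smul, I_mul_I, one_smul, neg_neg]
      abel
    have hcoeff : ∀ i ∈ Finset.univ, 0 < (![μ₂ ^ 3, μ₁ * μ₂, μ₂, I] i).im := by
      intro i _
      fin_cases i
      · exact im_pow_pos three_ne_zero h₂ (by push_cast; linarith)
      · exact im_mul_pos h₁ h₂ (by linarith [Real.pi_pos])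
      · simpa using im_pow_pos one_ne_zero h₂ (by push_cast; linarith [Real.pi_pos])
      · simp
    obtain ⟨hMx, hA₀x⟩ := mulVec_eq_zero_of_sum_smul_add_isHermitian
      (fun i _ ↦ by fin_cases i <;> assumption) hcoeff hA₀ (hP ▸ hPx)
    have hGx : G *ᵥ x = 0 := by simpa [smul_mulVec, neg_mulVec] using hMx 3 (by simp)
    exact hx (hker x hGx hA₀x (hMx 2 (by simp)) (hMx 1 (by simp)) (hMx 0 (by simp)))
  refine ⟨stable, fun μ h h' hdet ↦ ?_⟩
  obtain ⟨v, hv, hPv⟩ := exists_mulVec_eq_zero_iff.mpr hdet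
  exact stable μ μ h h' h h' v hv (by rwa [← sq])

open scoped ComplexOrder in
theorem stmt18 {n : ℕ} (R₁ R₂ R₃ A₀ G : Matrix (Fin n) (Fin n) ℂ)
    (hR₁ : R₁.PosSemidef) (hR₂ : R₂.PosSemidef) (hR₃ : R₃.PosSemidef)
    (hA₀ : A₀.IsHermitian) (hG : G.conjTranspose = -G)
    (hiG : ((-Complex.I) • G).PosSemidef)
    (hker : ∀ x : Fin n → ℂ, G.mulVec x = 0 → A₀.mulVec x = 0 → R₁.mulVec x = 0 →
      R₂.mulVec x = 0 → R₃.mulVec x = 0 → x = 0) :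
    (∀ μ₁ μ₂ : ℂ,
      0 < Complex.arg μ₁ → Complex.arg μ₁ < Real.pi / 3 →
      0 < Complex.arg μ₂ → Complex.arg μ₂ < Real.pi / 3 →
      ∀ x : Fin n → ℂ, x ≠ 0 →
        (μ₂ ^ 3 • R₃ + (μ₁ * μ₂) • R₂ + μ₂ • R₁ + A₀ + G).mulVec x ≠ 0) ∧
    (∀ μ : ℂ, 0 < Complex.arg μ → Complex.arg μ < Real.pi / 3 →
      (μ ^ 3 • R₃ + μ ^ 2 • R₂ + μ • R₁ + A₀ + G).det ≠ 0) :=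
  stmt18_general R₁ R₂ R₃ A₀ G hR₁ hR₂ hR₃ hA₀ hiG hker
end

section
/- Let R₀, R₁ ∈ ℂ^{n×n} be Hermitian positive semi-definite and J ∈ ℂ^{n×n} skew-Hermitian, and let a > 0. Assume ker R₀ ∩ ker R₁ ∩ ker J = {0}. Then the linear pencil P(λ) = λ(R₁ + J) + (R₀ + aJ) has all its eigenvalues in the closed left half-plane {z : Re z ≤ 0}. -/
/-!
If `P(μ) x = 0` with `x ≠ 0` and `Re μ > 0`, take the quadratic forms `r₀ = x* R₀ x ≥ 0`,
`r₁ = x* R₁ x ≥ 0` and `x* J x ∈ iℝ`, so that `μ r₁ + (μ + a) x* J x + r₀ = 0`. Multiplying by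
`conj (μ + a)` makes the `J` term `|μ + a|² x* J x`, purely imaginary, so the real part is
`(|μ|² + a Re μ) r₁ + (Re μ + a) r₀ = 0` with positive coefficients, hence `R₀ x = R₁ x = 0`;
then `P(μ) x = (μ + a) J x` forces `J x = 0`, contradicting the kernel condition.
-/

open scoped ComplexOrder
open Matrix

theorem Matrix.re_star_dotProduct_mulVec_of_conjTranspose_eq_neg {ι : Type*} [Fintype ι]
    {J : Matrix ι ι ℂ} (hJ : Jᴴ = -J) (x : ι → ℂ) : (star x ⬝ᵥ J *ᵥ x).re = 0 := by
  have hstar : star (star x ⬝ᵥ J *ᵥ x) = -(star x ⬝ᵥ J *ᵥ x) := by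
    rw [← star_dotProduct_star, star_star, star_mulVec, hJ, dotProduct_mulVec, vecMul_neg,
      neg_dotProduct, ← dotProduct_mulVec]
  have := congrArg Complex.re hstar
  rw [Complex.star_def, Complex.conj_re, Complex.neg_re] at this
  linarith

theorem Complex.eq_zero_of_mul_add_mul_add_eq_zero {μ c₀ c₁ c : ℂ} {a : ℝ} (ha : 0 < a)
    (hμ : 0 < μ.re) (h₀ : 0 ≤ c₀) (h₁ : 0 ≤ c₁) (hc : c.re = 0)
    (h : μ * c₁ + (μ + a) * c + c₀ = 0) : c₀ = 0 ∧ c₁ = 0 := by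
  obtain ⟨hr₀, hi₀⟩ := Complex.nonneg_iff.mp h₀
  obtain ⟨hr₁, hi₁⟩ := Complex.nonneg_iff.mp h₁
  have hre := congrArg Complex.re h
  have him := congrArg Complex.im h
  simp only [Complex.add_re, Complex.add_im, Complex.mul_re, Complex.mul_im, Complex.ofReal_re,
    Complex.ofReal_im, ← hi₀, ← hi₁, hc, Complex.zero_re, Complex.zero_im, mul_zero, add_zero,
    sub_zero] at hre him
  -- the real part of `conj (μ + a) * h`
  have key : ((μ.re + a) * μ.re + μ.im ^ 2) * c₁.re + (μ.re + a) * c₀.re = 0 := by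
    linear_combination (μ.re + a) * hre + μ.im * him
  have hr₁0 : c₁.re = 0 := by nlinarith [sq_nonneg μ.im, mul_pos (add_pos hμ ha) hμ]
  have hr₀0 : c₀.re = 0 := by
    rw [hr₁0, mul_zero, zero_add] at key
    exact (mul_eq_zero.mp key).resolve_left (add_pos hμ ha).ne'
  exact ⟨Complex.ext hr₀0 hi₀.symm, Complex.ext hr₁0 hi₁.symm⟩

theorem Matrix.pencil_mulVec {ι R : Type*} [Fintype ι] [CommSemiring R] (R₀ R₁ J : Matrix ι ι R)
    (μ c : R) (x : ι → R) :
    (μ • (R₁ + J) + (R₀ + c • J)) *ᵥ x = μ • R₁ *ᵥ x + (μ + c) • J *ᵥ x + R₀ *ᵥ x := by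
  simp only [add_mulVec, smul_mulVec, smul_add, add_smul]
  abel

open scoped ComplexOrder in
theorem stmt19 {n : ℕ} (R₀ R₁ J : Matrix (Fin n) (Fin n) ℂ)
    (hR₀ : R₀.PosSemidef) (hR₁ : R₁.PosSemidef)
    (hJ : J.conjTranspose = -J) (a : ℝ) (ha : 0 < a)
    (hker : ∀ x : Fin n → ℂ, R₀.mulVec x = 0 → R₁.mulVec x = 0 → J.mulVec x = 0 → x = 0) :
    ∀ μ : ℂ, (μ • (R₁ + J) + (R₀ + (a : ℂ) • J)).det = 0 → μ.re ≤ 0 := by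
  intro μ hdet
  by_contra! hμ
  obtain ⟨x, hx0, hx⟩ := exists_mulVec_eq_zero_iff.mpr hdet
  rw [pencil_mulVec] at hx
  have hform : μ * (star x ⬝ᵥ R₁ *ᵥ x) + (μ + a) * (star x ⬝ᵥ J *ᵥ x)
      + star x ⬝ᵥ R₀ *ᵥ x = 0 := by
    simpa only [dotProduct_add, dotProduct_smul, smul_eq_mul, dotProduct_zero]
      using congrArg (star x ⬝ᵥ ·) hx
  obtain ⟨h₀, h₁⟩ := Complex.eq_zero_of_mul_add_mul_add_eq_zero ha hμ
    (hR₀.dotProduct_mulVec_nonneg x) (hR₁.dotProduct_mulVec_nonneg x)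
    (re_star_dotProduct_mulVec_of_conjTranspose_eq_neg hJ x) hform
  have hR₀x := (hR₀.dotProduct_mulVec_zero_iff x).mp h₀
  have hR₁x := (hR₁.dotProduct_mulVec_zero_iff x).mp h₁
  have hμa : μ + a ≠ 0 := fun h => by
    have := congrArg Complex.re h
    simp only [Complex.add_re, Complex.ofReal_re, Complex.zero_re] at this
    linarith
  rw [hR₀x, hR₁x, smul_zero, zero_add, add_zero, smul_eq_zero] at hx
  exact hx0 (hker x hR₀x hR₁x (hx.resolve_left hμa))
end
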